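/- Let S be a measurable state space, r a bounded reward function, β ∈ (0,1), and define for a fixed policy the one-step τ-quantile Bellman operator (T_π^τ V)(s) = Q_τ[ r(α,s) + β V(s') | s ] acting on bounded functions V : S → ℝ. Then for all bounded V, W: ‖T_π^τ V − T_π^τ W‖_∞ ≤ β ‖V − W‖_∞. -/

import Mathlib

/-!
The τ-quantile is monotone and commutes with adding constants, so it is 1-Lipschitz for the sup
distance between random variables: if `|X - Y| ≤ d` pointwise then `|Q_τ[X] - Q_τ[Y]| ≤ d`.
For `X = r + β V(s')` and `Y = r + β W(s')` one can take `d = β ‖V - W‖_∞`. Boundedness keeps the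
sets whose infima define the quantiles nonempty and bounded below, where `sInf` is not a junk
value.
-/

open MeasureTheory Set Bornology

noncomputable def qtl {Ω : Type*} [MeasurableSpace Ω] (P : Measure Ω) (X : Ω → ℝ) (τ : ℝ) : ℝ :=
  sInf {x : ℝ | τ ≤ (P {ω | X ω ≤ x}).toReal}

section Quantile

variable {Ω : Type*} [MeasurableSpace Ω] (P : Measure Ω) {X Y : Ω → ℝ} {τ d : ℝ}

lemma bddBelow_qtl_set (hτ : 0 < τ) (hX : BddBelow (range X)) :
    BddBelow {x : ℝ | τ ≤ (P {ω | X ω ≤ x}).toReal} := by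
  obtain ⟨m, hm⟩ := hX
  refine ⟨m, fun x hx => not_lt.mp fun hxm => ?_⟩
  have hempty : {ω | X ω ≤ x} = ∅ :=
    eq_empty_of_forall_notMem fun ω hω => (hxm.trans_le (hm (mem_range_self ω))).not_ge hω
  simp only [mem_ofPred_eq, hempty, measure_empty, ENNReal.toReal_zero] at hx
  linarith

lemma nonempty_qtl_set [IsProbabilityMeasure P] (hτ : τ ≤ 1) (hX : BddAbove (range X)) :
    {x : ℝ | τ ≤ (P {ω | X ω ≤ x}).toReal}.Nonempty := by
  obtain ⟨M, hM⟩ := hX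
  have huniv : {ω | X ω ≤ M} = univ := eq_univ_of_forall fun ω => hM (mem_range_self ω)
  exact ⟨M, by simpa only [mem_ofPred_eq, huniv, measure_univ, ENNReal.toReal_one] using hτ⟩

variable [IsProbabilityMeasure P]

lemma qtl_le_qtl_add (hτ : τ ∈ Ioc 0 1) (hX : BddBelow (range X)) (hY : BddAbove (range Y))
    (hXY : ∀ ω, X ω ≤ Y ω + d) : qtl P X τ ≤ qtl P Y τ + d := by
  suffices qtl P X τ - d ≤ qtl P Y τ by linarith
  refine le_csInf (nonempty_qtl_set P hτ.2 hY) fun y hy => ?_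
  have hsub : {ω | Y ω ≤ y} ⊆ {ω | X ω ≤ y + d} := fun ω hω => (hXY ω).trans (by
    simpa only [mem_ofPred_eq, add_le_add_iff_right] using hω)
  have hmem : y + d ∈ {x : ℝ | τ ≤ (P {ω | X ω ≤ x}).toReal} :=
    hy.trans (ENNReal.toReal_mono (measure_ne_top _ _) (measure_mono hsub))
  linarith [show qtl P X τ ≤ y + d from csInf_le (bddBelow_qtl_set P hτ.1 hX) hmem]

lemma abs_qtl_sub_qtl_le (hτ : τ ∈ Ioc 0 1) (hX : IsBounded (range X))
    (hXY : ∀ ω, |X ω - Y ω| ≤ d) : |qtl P X τ - qtl P Y τ| ≤ d := by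
  obtain ⟨⟨m, hm⟩, ⟨M, hM⟩⟩ := isBounded_iff_bddBelow_bddAbove.mp hX
  have hYbelow : BddBelow (range Y) := ⟨m - d, forall_mem_range.mpr fun ω => by
    linarith [hm (mem_range_self ω), (abs_le.mp (hXY ω)).2]⟩
  have hYabove : BddAbove (range Y) := ⟨M + d, forall_mem_range.mpr fun ω => by
    linarith [hM (mem_range_self ω), (abs_le.mp (hXY ω)).1]⟩
  rw [abs_sub_le_iff]
  constructor
  · linarith [qtl_le_qtl_add P hτ ⟨m, hm⟩ hYabove fun ω => by linarith [(abs_le.mp (hXY ω)).2]]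
  · linarith [qtl_le_qtl_add P hτ hYbelow ⟨M, hM⟩ fun ω => by linarith [(abs_le.mp (hXY ω)).1]]

end Quantile

/-- `P s` is the joint law, given the state `s`, of the randomness in the action and the
transition; `rv s ω` is the reward and `ns s ω` the next state. -/
theorem quantile_bellman_contraction_general {S Ω : Type*} [MeasurableSpace Ω]
    (P : S → Measure Ω) [∀ s, IsProbabilityMeasure (P s)]
    (rv : S → Ω → ℝ) (Mr : ℝ) (hr : ∀ s ω, |rv s ω| ≤ Mr)
    (ns : S → Ω → S)
    (β τ : ℝ) (hβ : β ∈ Set.Ioo (0 : ℝ) 1) (hτ : τ ∈ Set.Ioo (0 : ℝ) 1)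
    (V W : S → ℝ) (hV : ∃ M : ℝ, ∀ s, |V s| ≤ M)
    (c : ℝ) (hc : ∀ s, |V s - W s| ≤ c) :
    ∀ s, |qtl (P s) (fun ω => rv s ω + β * V (ns s ω)) τ
        - qtl (P s) (fun ω => rv s ω + β * W (ns s ω)) τ| ≤ β * c := by
  obtain ⟨MV, hMV⟩ := hV
  intro s
  have hbounded : IsBounded (range fun ω => rv s ω + β * V (ns s ω)) :=
    isBounded_iff_forall_norm_le.mpr ⟨Mr + β * MV, forall_mem_range.mpr fun ω => by
      rw [Real.norm_eq_abs]
      calc |rv s ω + β * V (ns s ω)| ≤ |rv s ω| + |β * V (ns s ω)| := abs_add_le _ _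
        _ = |rv s ω| + β * |V (ns s ω)| := by rw [abs_mul, abs_of_pos hβ.1]
        _ ≤ Mr + β * MV := add_le_add (hr s ω) (mul_le_mul_of_nonneg_left (hMV _) hβ.1.le)⟩
  refine abs_qtl_sub_qtl_le (P s) (Ioo_subset_Ioc_self hτ) hbounded fun ω => ?_
  rw [add_sub_add_left_eq_sub, ← mul_sub, abs_mul, abs_of_pos hβ.1]
  exact mul_le_mul_of_nonneg_left (hc _) hβ.1.le

/-- The one-step τ-quantile Bellman operator for a fixed policy is a `β`-contraction in the
sup norm.  For each state `s`, `P s` is the joint law of the randomness (action drawn from the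
policy and transition), `rv s ω` the (bounded) reward and `ns s ω` the next state; the operator
is `(T V)(s) = Q_τ[ r + β V(s') | s ]`. -/
theorem quantile_bellman_contraction {S Ω : Type*} [MeasurableSpace Ω]
    (P : S → Measure Ω) [∀ s, IsProbabilityMeasure (P s)]
    (rv : S → Ω → ℝ) (Mr : ℝ) (hr : ∀ s ω, |rv s ω| ≤ Mr)
    (ns : S → Ω → S)
    (β τ : ℝ) (hβ : β ∈ Set.Ioo (0 : ℝ) 1) (hτ : τ ∈ Set.Ioo (0 : ℝ) 1)
    (V W : S → ℝ) (hV : ∃ M : ℝ, ∀ s, |V s| ≤ M) (hW : ∃ M : ℝ, ∀ s, |W s| ≤ M)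
    (c : ℝ) (hc : ∀ s, |V s - W s| ≤ c) :
    ∀ s, |qtl (P s) (fun ω => rv s ω + β * V (ns s ω)) τ
        - qtl (P s) (fun ω => rv s ω + β * W (ns s ω)) τ| ≤ β * c :=
  quantile_bellman_contraction_general P rv Mr hr ns β τ hβ hτ V W hV c hc
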